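/- Let G be a connected twin-free bipartite graph of order n ≥ 2. Then imax(G) ≥ ⌈n/2⌉ + 1. -/

import Mathlib

open SimpleGraph

/-- `s` is an independent set in `G`. -/
def IsIndep {V : Type*} (G : SimpleGraph V) (s : Set V) : Prop :=
  ∀ ⦃u⦄, u ∈ s → ∀ ⦃v⦄, v ∈ s → ¬ G.Adj u v

/-- `s` is a maximal independent set in `G`. -/
def IsMaxIndep {V : Type*} (G : SimpleGraph V) (s : Set V) : Prop :=
  IsIndep G s ∧ ∀ t : Set V, IsIndep G t → s ⊆ t → s = t

/-- The number of maximal independent sets of `G`. -/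
noncomputable def imax {V : Type*} (G : SimpleGraph V) : ℕ :=
  Set.ncard {s : Set V | IsMaxIndep G s}

/-- `G` is twin-free: no two distinct vertices have the same open neighbourhood. -/
def TwinFree {V : Type*} (G : SimpleGraph V) : Prop :=
  ∀ u v : V, G.neighborSet u = G.neighborSet v → u = v

/-!
Let `A`, `B` be the colour classes of `G`; since `G` is connected with at least two vertices, both
are maximal independent sets. For `a ∈ A`, the set `{a} ∪ (B \ N(a))` is independent; extend it
to a maximal independent set `M a`. If `M a = M a'`, every neighbour `x` of `a` lies in `B`, and
`x ∉ N(a')` would put the adjacent pair `a, x` in `M a'`, so `N(a) ⊆ N(a')` and symmetrically;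
twin-freeness gives `a = a'`. Also `M a ≠ B` as `a ∈ M a`. Hence `imax G ≥ |A| + 1`, likewise
`imax G ≥ |B| + 1`, and the larger class has at least `⌈n/2⌉` vertices.
-/

section

variable {V : Type*} {G : SimpleGraph V}

lemma isIndep_iff_isIndepSet {s : Set V} : IsIndep G s ↔ G.IsIndepSet s :=
  ⟨fun h _ hu _ hv _ => h hu hv, fun h _ hu _ hv huv => h hu hv huv.ne huv⟩

lemma exists_isMaxIndep_superset {s : Set V} (hs : IsIndep G s) :
    ∃ m, s ⊆ m ∧ IsMaxIndep G m := by
  obtain ⟨m, hsm, hmax⟩ := zorn_subset_nonempty {t | G.IsIndepSet t}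
    (fun c hc hchain _ => ⟨⋃₀ c, (Set.pairwise_sUnion hchain.directedOn).2 hc,
      fun _ => Set.subset_sUnion_of_mem⟩) s (isIndep_iff_isIndepSet.1 hs)
  exact ⟨m, hsm, isIndep_iff_isIndepSet.2 hmax.prop,
    fun t ht hmt => hmt.antisymm (hmax.2 (isIndep_iff_isIndepSet.1 ht) hmt)⟩

lemma isMaxIndep_of_forall_exists_adj {s : Set V} (hs : IsIndep G s)
    (hdom : ∀ v ∉ s, ∃ w ∈ s, G.Adj v w) : IsMaxIndep G s := by
  refine ⟨hs, fun t ht hst => hst.antisymm fun v hv => ?_⟩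
  by_contra hvs
  obtain ⟨w, hw, hvw⟩ := hdom v hvs
  exact ht hv (hst hw) hvw

lemma isMaxIndep_colorClass (C : G.Coloring (Fin 2)) (hadj : ∀ v, ∃ w, G.Adj v w) (i : Fin 2) :
    IsMaxIndep G (C.colorClass i) := by
  refine isMaxIndep_of_forall_exists_adj
    (isIndep_iff_isIndepSet.2 (C.isIndepSet_colorClass i)) fun v hv => ?_
  obtain ⟨w, hvw⟩ := hadj v
  have hfin2 : ∀ a b c : Fin 2, a ≠ b → a ≠ c → b = c := by decide
  exact ⟨w, hfin2 (C v) (C w) i (C.valid hvw) hv, hvw⟩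

lemma compl_colorClass_zero (C : G.Coloring (Fin 2)) : (C.colorClass 0)ᶜ = C.colorClass 1 := by
  ext v
  simp only [Set.mem_compl_iff, Coloring.colorClass, Set.mem_ofPred_eq]
  omega

lemma isIndep_insert_diff_neighborSet {Q : Set V} (hQ : IsIndep G Q) (a : V) :
    IsIndep G (insert a (Q \ G.neighborSet a)) := by
  rintro u (rfl | ⟨hu, hua⟩) v (rfl | ⟨hv, hva⟩) huv
  · exact G.irrefl huv
  · exact hva huv
  · exact hua huv.symm
  · exact hQ hu hv huv

lemma neighborSet_subset_of_isIndep {M Q : Set V} {a a' : V} (hM : IsIndep G M) (ha : a ∈ M)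
    (hQM : Q \ G.neighborSet a' ⊆ M) (haQ : G.neighborSet a ⊆ Q) :
    G.neighborSet a ⊆ G.neighborSet a' := by
  intro x hx
  by_contra hx'
  exact hM ha (hQM ⟨haQ hx, hx'⟩) hx

lemma ncard_add_one_le_imax [Finite V] (htf : TwinFree G) {P : Set V} (hP : IsIndep G P)
    (hQ : IsMaxIndep G Pᶜ) : P.ncard + 1 ≤ imax G := by
  choose! M hsubM hM using fun a =>
    exists_isMaxIndep_superset (isIndep_insert_diff_neighborSet hQ.1 a)
  have hmem : ∀ a, a ∈ M a := fun a => hsubM a (Set.mem_insert a _)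
  have hdiff : ∀ a, Pᶜ \ G.neighborSet a ⊆ M a :=
    fun a => (Set.subset_insert a _).trans (hsubM a)
  have hnbr : ∀ a ∈ P, G.neighborSet a ⊆ Pᶜ := fun a ha x hx hxP => hP ha hxP hx
  have hinj : Set.InjOn M P := fun a ha a' ha' hMa =>
    htf a a' <| subset_antisymm
      (neighborSet_subset_of_isIndep (hM a').1 (hMa ▸ hmem a) (hdiff a') (hnbr a ha))
      (neighborSet_subset_of_isIndep (hM a).1 (hMa ▸ hmem a') (hdiff a) (hnbr a' ha'))
  have hQ_notMem : Pᶜ ∉ M '' P := by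
    rintro ⟨a, ha, hMa⟩
    exact (hMa ▸ hmem a) ha
  calc P.ncard + 1 = (insert Pᶜ (M '' P)).ncard := by
        rw [Set.ncard_insert_of_notMem hQ_notMem (Set.toFinite _), hinj.ncard_image]
    _ ≤ imax G := by
        refine Set.ncard_le_ncard ?_ (Set.toFinite _)
        rintro s (rfl | ⟨a, -, rfl⟩)
        exacts [hQ, hM a]

end

theorem stmt_8 {V : Type*} [Fintype V] (G : SimpleGraph V)
    (hconn : G.Connected) (htf : TwinFree G) (hbip : G.Colorable 2)
    (hn : 2 ≤ Fintype.card V) :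
    (Fintype.card V + 1) / 2 + 1 ≤ imax G := by
  obtain ⟨C⟩ := hbip
  have : Nontrivial V := Fintype.one_lt_card_iff_nontrivial.1 (by omega)
  have hmax := isMaxIndep_colorClass C hconn.preconnected.exists_adj_of_nontrivial
  have hcompl := compl_colorClass_zero C
  have h0 := ncard_add_one_le_imax htf (hmax 0).1 (hcompl ▸ hmax 1)
  have h1 := ncard_add_one_le_imax htf (hmax 1).1 (by rw [← hcompl, compl_compl]; exact hmax 0)
  have hcard := Set.ncard_add_ncard_compl (C.colorClass 0)
  rw [hcompl, Nat.card_eq_fintype_card] at hcard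
  omega
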